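/- Let A be an associative unital ℂ-algebra, r, s nonzero complex numbers, and a, b, c, d, f ∈ A. Then the RTT-relation R(G_{r,s}) * T₁ * T₂ = T₂ * T₁ * R(G_{r,s}) holds (as an equality of matrices over A indexed by (Fin 3 × Fin 3)) if and only if the following relations hold: ab = r⁻¹·ba, ac = r⁻¹·ca, db = r·bd, dc = r·cd, bc = cb, ad − da = (r⁻¹ − r)·bc, af = fa, df = fd, bf = s⁻¹·fb, cf = s·fc. -/

import Mathlib

noncomputable section

open Matrix

/-- The `R`-matrix of the quantum group `G_{r,s}`, indexed by `Fin 3 × Fin 3`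
(indices `0,1,2` correspond to the paper's `1,2,3`). -/
def Rgrs (r s : ℂ) : Matrix (Fin 3 × Fin 3) (Fin 3 × Fin 3) ℂ :=
  fun p q =>
    if p = (0, 0) ∧ q = (0, 0) then r
    else if p = (1, 1) ∧ q = (1, 1) then r
    else if p = (2, 2) ∧ q = (2, 2) then r
    else if p = (0, 1) ∧ q = (0, 1) then 1
    else if p = (1, 0) ∧ q = (1, 0) then 1
    else if p = (1, 2) ∧ q = (1, 2) then 1
    else if p = (2, 1) ∧ q = (2, 1) then 1
    else if p = (0, 2) ∧ q = (0, 2) then s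
    else if p = (2, 0) ∧ q = (2, 0) then s⁻¹
    else if p = (0, 1) ∧ q = (1, 0) then r - r⁻¹
    else if p = (0, 2) ∧ q = (2, 0) then r - r⁻¹
    else if p = (1, 2) ∧ q = (2, 1) then r - r⁻¹
    else 0

/-- The matrix of generators `T` of `G_{r,s}` (or `G_{m,k}`). -/
def Tmat {A : Type*} [Ring A] (a b c d f : A) : Matrix (Fin 3) (Fin 3) A :=
  !![a, b, 0; c, d, 0; 0, 0, f]

/-- `T₁ = T ⊗ 1`. -/
def T1 {A : Type*} [Ring A] (T : Matrix (Fin 3) (Fin 3) A) :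
    Matrix (Fin 3 × Fin 3) (Fin 3 × Fin 3) A :=
  fun p q => if p.2 = q.2 then T p.1 q.1 else 0

/-- `T₂ = 1 ⊗ T`. -/
def T2 {A : Type*} [Ring A] (T : Matrix (Fin 3) (Fin 3) A) :
    Matrix (Fin 3 × Fin 3) (Fin 3 × Fin 3) A :=
  fun p q => if p.1 = q.1 then T p.2 q.2 else 0

set_option maxHeartbeats 2000000 in
/-- the `RTT`-relations for `R(G_{r,s})` hold iff the generators satisfy
the defining commutation relations of `G_{r,s}`. -/
theorem Grs_RTT_iff_relations (A : Type*) [Ring A] [Algebra ℂ A]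
    (r s : ℂ) (hr : r ≠ 0) (hs : s ≠ 0) (a b c d f : A) :
    ((Rgrs r s).map (algebraMap ℂ A) * T1 (Tmat a b c d f) * T2 (Tmat a b c d f) =
        T2 (Tmat a b c d f) * T1 (Tmat a b c d f) * (Rgrs r s).map (algebraMap ℂ A)) ↔
      (a * b = r⁻¹ • (b * a) ∧
       a * c = r⁻¹ • (c * a) ∧
       d * b = r • (b * d) ∧
       d * c = r • (c * d) ∧
       b * c = c * b ∧
       a * d - d * a = (r⁻¹ - r) • (b * c) ∧
       a * f = f * a ∧
       d * f = f * d ∧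
       b * f = s⁻¹ • (f * b) ∧
       c * f = s • (f * c)) := by
  have simpset := 0
  constructor
  · intro h
    have e0 := congrFun (congrFun h ((0:Fin 3),(0:Fin 3))) ((0:Fin 3),(1:Fin 3))
    have e1 := congrFun (congrFun h ((1:Fin 3),(0:Fin 3))) ((0:Fin 3),(0:Fin 3))
    have e2 := congrFun (congrFun h ((1:Fin 3),(0:Fin 3))) ((1:Fin 3),(1:Fin 3))
    have e3 := congrFun (congrFun h ((1:Fin 3),(1:Fin 3))) ((0:Fin 3),(1:Fin 3))
    have e4 := congrFun (congrFun h ((1:Fin 3),(0:Fin 3))) ((0:Fin 3),(1:Fin 3))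
    have e5 := congrFun (congrFun h ((1:Fin 3),(0:Fin 3))) ((1:Fin 3),(0:Fin 3))
    have e6 := congrFun (congrFun h ((2:Fin 3),(0:Fin 3))) ((2:Fin 3),(0:Fin 3))
    have e7 := congrFun (congrFun h ((1:Fin 3),(2:Fin 3))) ((1:Fin 3),(2:Fin 3))
    have e8 := congrFun (congrFun h ((0:Fin 3),(2:Fin 3))) ((1:Fin 3),(2:Fin 3))
    have e9 := congrFun (congrFun h ((1:Fin 3),(2:Fin 3))) ((0:Fin 3),(2:Fin 3))
    simp [Matrix.mul_apply, Fintype.sum_prod_type, Fin.sum_univ_three, Rgrs, T1, T2, Tmat,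
      ← Algebra.smul_def, ← Algebra.commutes, smul_mul_assoc, mul_smul_comm,
      Prod.ext_iff] at e0 e1 e2 e3 e4 e5 e6 e7 e8 e9
    refine ⟨(eq_inv_smul_iff₀ hr).mpr e0, (eq_inv_smul_iff₀ hr).mpr e1.symm, e2, e3.symm,
      e4.symm, ?_, by simpa [smul_inv_smul₀ hs] using (congrArg (s • ·) e6).symm, e7,
      (eq_inv_smul_iff₀ hs).mpr e8, e9⟩
    rw [e5]; module
  · rintro ⟨hab, hac, hdb, hdc, hbc, had, haf, hdf, hbf, hcf⟩
    have hba : b * a = r • (a * b) := by rw [hab, smul_inv_smul₀ hr]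
    have hca : c * a = r • (a * c) := by rw [hac, smul_inv_smul₀ hr]
    have hda : d * a = a * d - (r⁻¹ - r) • (b * c) := by rw [← had]; abel
    have hcb : c * b = b * c := hbc.symm
    have hfa : f * a = a * f := haf.symm
    have hfd : f * d = d * f := hdf.symm
    have hfb : f * b = s • (b * f) := by rw [hbf, smul_inv_smul₀ hs]
    have hfc : f * c = s⁻¹ • (c * f) := by rw [hcf, inv_smul_smul₀ hs]
    ext ⟨i, j⟩ ⟨k, l⟩
    fin_cases i <;> fin_cases j <;> fin_cases k <;> fin_cases l <;>
      simp [Matrix.mul_apply, Fintype.sum_prod_type, Fin.sum_univ_three, Rgrs, T1, T2, Tmat,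
        ← Algebra.smul_def, ← Algebra.commutes, smul_mul_assoc, mul_smul_comm, Prod.ext_iff,
        hba, hca, hda, hcb, hfa, hfd, hfb, hfc, hdb, hdc] <;>
      match_scalars <;> field_simp <;> ring
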